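/- arXiv:0902.3846 — 6 statements merged into one kernel-verified Lean document; each statement's English description precedes it below -/
import Mathlib

section
/- Let G = (V,E) be a graph (self-loops allowed) on n vertices whose every connected component is a tree plus one extra edge whose unique cycle has odd length. Then for generic (e.g., all nonzero) p : V → R, the only solution ẋ : V → R of the system p_i ẋ_j + p_j ẋ_i = 0 for all (i,j) ∈ E is ẋ = 0. Conversely, if some component's unique cycle has even length, a nonzero solution exists. -/
/-!
Along an edge `ij` the equation says `x j / p j = -(x i / p i)`, so along a walk the ratio `x / p`
is multiplied by `(-1) ^ length`; an odd closed walk forces it to vanish, and then it vanishes on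
the whole component.

Conversely, a connected graph with as many edges as vertices becomes a tree when an edge `e` of a
cycle is deleted. The rest of the cycle is a walk of odd length between the ends of `e` when the
cycle is even, so a 2-colouring of the tree separates them and is a 2-colouring of the component.
Then `x = ±p` according to the colour on that component, and `0` elsewhere, is a nonzero solution.
-/

namespace SimpleGraph

variable {W : Type*} {H : SimpleGraph W}

theorem isTree_deleteEdges_of_mem_edges_of_isCycle [Finite W] (hconn : H.Connected)
    (hcard : Nat.card H.edgeSet = Nat.card W) {u : W} {c : H.Walk u u} (hc : c.IsCycle)
    {e : Sym2 W} (he : e ∈ c.edges) : (H.deleteEdges {e}).IsTree := by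
  have heH : e ∈ H.edgeSet := c.edges_subset_edgeSet he
  rw [isTree_iff_connected_and_card]
  constructor
  · induction e with
    | h x y =>
      exact hconn.connected_delete_edge_of_not_isBridge
        fun hbr => hbr.notMem_edges_of_isCycle hc he
  · rw [edgeSet_deleteEdges, Nat.card_coe_set_eq, Set.ncard_sdiff_singleton_add_one heH,
      ← Nat.card_coe_set_eq, hcard]

theorem Coloring.nonempty_of_deleteEdges_of_odd_walk {u w : W}
    (κ : (H.deleteEdges {s(u, w)}).Coloring Bool) (p : H.Walk w u) (hp : s(u, w) ∉ p.edges)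
    (hodd : Odd p.length) : Nonempty (H.Coloring Bool) := by
  let p' := p.toDeleteEdges {s(u, w)} fun e he he' => hp (Set.mem_singleton_iff.mp he' ▸ he)
  have hκ : κ u ≠ κ w := by
    have := (κ.odd_length_iff_not_congr p').mp (by simpa [p'] using hodd)
    exact fun h => by simp [h] at this
  refine ⟨Coloring.mk κ fun {a b} hab => ?_⟩
  by_cases he : s(a, b) = s(u, w)
  · rcases Sym2.eq_iff.mp he with ⟨rfl, rfl⟩ | ⟨rfl, rfl⟩
    · exact hκ
    · exact hκ.symm
  · exact κ.valid (by simpa [deleteEdges_adj, hab] using he)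

theorem Connected.nonempty_coloring_bool_of_even_cycle [Finite W] (hconn : H.Connected)
    (hcard : Nat.card H.edgeSet = Nat.card W) {v : W} {c : H.Walk v v} (hc : c.IsCycle)
    (heven : Even c.length) : Nonempty (H.Coloring Bool) := by
  cases c with
  | nil => exact (Walk.not_isCycle_nil hc).elim
  | @cons _ w _ h p =>
    have hT := isTree_deleteEdges_of_mem_edges_of_isCycle hconn hcard hc (e := s(v, w)) (by simp)
    obtain ⟨κ⟩ := hT.isAcyclic.colorable_two
    exact (recolorOfEquiv _ finTwoEquiv κ).nonempty_of_deleteEdges_of_odd_walk p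
      ((Walk.cons_isCycle_iff p h).mp hc).2 (by simpa [Nat.even_add_one] using heven)

theorem card_edgeSet_induce (G : SimpleGraph W) (s : Set W) :
    Nat.card (G.induce s).edgeSet = Nat.card {e : Sym2 W // e ∈ G.edgeSet ∧ ∀ v ∈ e, v ∈ s} := by
  refine Nat.card_congr <| Equiv.ofBijective
    (fun e => ⟨Sym2.map (↑) e.1, ?_⟩) ⟨fun e₁ e₂ h => ?_, fun e => ?_⟩
  · obtain ⟨e, he⟩ := e
    induction e with
    | h x y => simpa using he
  · exact Subtype.ext (Sym2.map.injective Subtype.val_injective (congrArg Subtype.val h))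
  · obtain ⟨e, he, hs⟩ := e
    induction e with
    | h x y =>
      exact ⟨⟨s(⟨x, hs x (Sym2.mem_mk_left x y)⟩, ⟨y, hs y (Sym2.mem_mk_right x y)⟩), he⟩, rfl⟩

theorem Walk.length_induce {s : Set W} {u v : W} (w : H.Walk u v) (hw : ∀ x ∈ w.support, x ∈ s) :
    (w.induce s hw).length = w.length := by
  induction w with
  | nil => rfl
  | cons h w ih => simp [ih]

theorem Walk.IsCycle.induce {s : Set W} {u : W} {c : H.Walk u u} (hc : c.IsCycle)
    (hs : ∀ x ∈ c.support, x ∈ s) : (c.induce s hs).IsCycle :=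
  (Walk.isCycle_map_iff_of_injective (Embedding.induce (G := H) s).injective).mp
    (by rwa [Walk.map_induce])

end SimpleGraph

open SimpleGraph

section GramCompletion

variable {V : Type*} {G : SimpleGraph V} {p x : V → ℝ}

theorem div_eq_neg_one_pow_mul_of_walk (hp : ∀ i, p i ≠ 0)
    (hx : ∀ i j, G.Adj i j → p i * x j + p j * x i = 0) {a b : V} (w : G.Walk a b) :
    x b / p b = (-1) ^ w.length * (x a / p a) := by
  induction w with
  | nil => simp
  | @cons a c b h w ih =>
    have hstep : x c / p c = -(x a / p a) := by
      field_simp [hp a, hp c]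
      linear_combination hx a c h
    rw [ih, hstep, Walk.length_cons, pow_succ]
    ring

theorem eq_zero_of_odd_closed_walk (hp : ∀ i, p i ≠ 0)
    (hx : ∀ i j, G.Adj i j → p i * x j + p j * x i = 0) {v : V} (w : G.Walk v v)
    (hodd : Odd w.length) : x v = 0 := by
  have h := div_eq_neg_one_pow_mul_of_walk hp hx w
  rw [hodd.neg_one_pow] at h
  simpa [hp v] using (by linarith : x v / p v = 0)

theorem eq_zero_of_reachable (hp : ∀ i, p i ≠ 0)
    (hx : ∀ i j, G.Adj i j → p i * x j + p j * x i = 0) {u v : V} (hv : x v = 0)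
    (hvu : G.Reachable v u) : x u = 0 := by
  obtain ⟨w⟩ := hvu
  simpa [hv, hp u] using div_eq_neg_one_pow_mul_of_walk hp hx w

open Classical in
noncomputable def coloringSign (c : G.ConnectedComponent) (κ : c.toSimpleGraph.Coloring Bool)
    (u : V) : ℝ :=
  if h : u ∈ c.supp then (if κ ⟨u, h⟩ then 1 else -1) else 0

theorem coloringSign_adj (c : G.ConnectedComponent) (κ : c.toSimpleGraph.Coloring Bool)
    {i j : V} (hij : G.Adj i j) : coloringSign c κ j = -coloringSign c κ i := by
  by_cases hi : i ∈ c.supp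
  · have hj : j ∈ c.supp := c.mem_supp_of_adj_mem_supp hi hij
    have hκ := κ.valid ((c.toSimpleGraph_adj hi hj).mpr hij)
    unfold coloringSign
    rw [dif_pos hi, dif_pos hj]
    revert hκ
    cases κ ⟨i, hi⟩ <;> cases κ ⟨j, hj⟩ <;> norm_num
  · have hj : j ∉ c.supp := fun hj => hi (c.mem_supp_of_adj_mem_supp hj hij.symm)
    simp [coloringSign, hi, hj]

theorem exists_ne_zero_solution_of_coloring (hp : ∀ i, p i ≠ 0) (c : G.ConnectedComponent)
    (κ : c.toSimpleGraph.Coloring Bool) :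
    ∃ x : V → ℝ, x ≠ 0 ∧ ∀ i j, G.Adj i j → p i * x j + p j * x i = 0 := by
  refine ⟨fun u => coloringSign c κ u * p u, fun h0 => ?_, fun i j hij => ?_⟩
  · obtain ⟨u, hu⟩ := c.nonempty_supp
    have := congrFun h0 u
    simp only [coloringSign, dif_pos hu, Pi.zero_apply, mul_eq_zero, hp u, or_false] at this
    split_ifs at this <;> norm_num at this
  · simp only [coloringSign_adj c κ hij]
    ring

end GramCompletion

/-- 1D Gram local completion: if every connected component of G is a tree plus one extra
edge (edge count = vertex count per component) and each component contains an odd cycle,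
then for nonzero p the only solution of p_i ẋ_j + p_j ẋ_i = 0 over edges is ẋ = 0.
Conversely, if some component's cycle has even length, a nonzero solution exists. -/
theorem stmt_6 {V : Type} [Fintype V] (G : SimpleGraph V)
    (hE : ∀ c : G.ConnectedComponent,
      Nat.card {e : Sym2 V // e ∈ G.edgeSet ∧ ∀ v ∈ e, G.connectedComponentMk v = c} =
      Nat.card {v : V // G.connectedComponentMk v = c})
    (p : V → ℝ) (hp : ∀ i, p i ≠ 0) :
    ((∀ c : G.ConnectedComponent, ∃ v, G.connectedComponentMk v = c ∧
        ∃ w : G.Walk v v, w.IsCycle ∧ Odd w.length) →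
      ∀ x : V → ℝ, (∀ i j, G.Adj i j → p i * x j + p j * x i = 0) → x = 0) ∧
    ((∃ (v : V) (w : G.Walk v v), w.IsCycle ∧ Even w.length) →
      ∃ x : V → ℝ, x ≠ 0 ∧ ∀ i j, G.Adj i j → p i * x j + p j * x i = 0) := by
  constructor
  · intro hodd x hx
    funext u
    obtain ⟨v, hv, w, -, hw⟩ := hodd (G.connectedComponentMk u)
    exact eq_zero_of_reachable hp hx (eq_zero_of_odd_closed_walk hp hx w hw)
      (ConnectedComponent.exact hv)
  · classical
    rintro ⟨v, C, hC, heven⟩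
    set c := G.connectedComponentMk v
    have hsupp : ∀ u ∈ C.support, u ∈ c.supp := fun u hu =>
      (ConnectedComponent.sound ⟨C.takeUntil u hu⟩).symm
    have hcard : Nat.card c.toSimpleGraph.edgeSet = Nat.card c :=
      (card_edgeSet_induce G c.supp).trans (hE c)
    obtain ⟨κ⟩ := c.connected_toSimpleGraph.nonempty_coloring_bool_of_even_cycle hcard
      (hC.induce hsupp) (Walk.length_induce C hsupp ▸ heven)
    exact exists_ne_zero_solution_of_coloring hp c κ
end

section
/- If a graph G on n vertices (n ≥ d) is minimally Gram locally completable in rank d — meaning the generic completion matrix C_G(p) has rank dn − d(d−1)/2 and no edge can be removed without dropping the rank — then |E(G)| = dn − d(d−1)/2, and moreover every induced subgraph on n' ≥ d vertices has at most dn' − d(d−1)/2 edges. -/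
/-!
Every skew-symmetric `A` gives the infinitesimal rotation `ṗ_v = A p_v`, which solves every
equation `p_i · ṗ_j + p_j · ṗ_i = 0`. If the edges lie inside `S` and `p(S)` spans `ℝ^d`, these
rotations restricted to `S` form a `d(d-1)/2`-dimensional space of solutions of the system
seen in the `d|S|` coordinates of `S`, so rank-nullity bounds the rank by `d|S| - d(d-1)/2`.
Minimality says that no row of `C_G(p)` lies in the span of the others, so the rows are
linearly independent; the same then holds for the rows of any induced subgraph, whose rank is
therefore its number of edges.
-/

open Matrix

/-- The completion matrix of the system p_i · ṗ_j + p_j · ṗ_i = 0 over the edges E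
(ordered pairs, self-loops allowed). -/
def completionMatrix {n d : ℕ} (E : Finset (Fin n × Fin n)) (p : Fin n → Fin d → ℝ) :
    Matrix {e // e ∈ E} (Fin n × Fin d) ℝ :=
  Matrix.of fun e kl =>
    (if kl.1 = (e : Fin n × Fin n).1 then p (e : Fin n × Fin n).2 kl.2 else 0) +
    (if kl.1 = (e : Fin n × Fin n).2 then p (e : Fin n × Fin n).1 kl.2 else 0)

theorem dotProduct_mulVec_add_dotProduct_mulVec_eq_zero {m R : Type*} [Fintype m] [CommRing R]
    {A : Matrix m m R} (hA : Aᵀ = -A) (x y : m → R) :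
    x ⬝ᵥ A *ᵥ y + y ⬝ᵥ A *ᵥ x = 0 := by
  rw [dotProduct_mulVec y, ← mulVec_transpose, hA, dotProduct_comm, neg_mulVec, neg_dotProduct,
    add_neg_cancel]

theorem linearIndepOn_of_finrank_span_diff_lt {K V ι : Type*} [DivisionRing K] [AddCommGroup V]
    [Module K V] {v : ι → V} {s : Set ι}
    (h : ∀ i ∈ s, Module.finrank K (Submodule.span K (v '' (s \ {i}))) <
      Module.finrank K (Submodule.span K (v '' s))) :
    LinearIndepOn K v s := by
  refine linearIndepOn_iff_notMem_span.2 fun i hi hmem =>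
    (h i hi).ne (congrArg (fun W : Submodule K V => Module.finrank K W) ?_)
  refine le_antisymm (Submodule.span_mono (Set.image_mono Set.sdiff_subset)) ?_
  rw [Submodule.span_le]
  rintro _ ⟨j, hj, rfl⟩
  by_cases hji : j = i
  · exact hji ▸ hmem
  · exact Submodule.subset_span ⟨j, ⟨hj, hji⟩, rfl⟩

section SkewOfLower

variable (d : ℕ)

abbrev LowerPairs : Type := {q : Fin d × Fin d // q.2 < q.1}

theorem card_lowerPairs : Fintype.card (LowerPairs d) = d * (d - 1) / 2 := by
  let e : LowerPairs d ≃ Σ i : Fin d, Fin i :=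
    { toFun q := ⟨q.1.1, q.1.2, q.2⟩
      invFun s := ⟨(s.1, ⟨s.2, s.2.2.trans s.1.2⟩), s.2.2⟩ }
  rw [Fintype.card_congr e, Fintype.card_sigma]
  simp only [Fintype.card_fin]
  rw [Fin.sum_univ_eq_sum_range (fun i => i) d, Finset.sum_range_id]

def lowerOf : (LowerPairs d → ℝ) →ₗ[ℝ] Matrix (Fin d) (Fin d) ℝ where
  toFun a := of fun i j => if h : j < i then a ⟨(i, j), h⟩ else 0
  map_add' a b := by ext i j; by_cases h : j < i <;> simp [h]
  map_smul' c a := by ext i j; by_cases h : j < i <;> simp [h]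

def skewOfLower : (LowerPairs d → ℝ) →ₗ[ℝ] Matrix (Fin d) (Fin d) ℝ :=
  lowerOf d - (transposeLinearEquiv (Fin d) (Fin d) ℝ ℝ).toLinearMap ∘ₗ lowerOf d

variable {d}

theorem skewOfLower_transpose (a : LowerPairs d → ℝ) :
    (skewOfLower d a)ᵀ = -skewOfLower d a := by
  simp [skewOfLower]

theorem skewOfLower_apply_lower (a : LowerPairs d → ℝ) (q : LowerPairs d) :
    skewOfLower d a q.1.1 q.1.2 = a q := by
  simp [skewOfLower, lowerOf, q.2, q.2.not_gt]

theorem skewOfLower_injective : Function.Injective (skewOfLower d) := by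
  intro a b hab
  ext q
  rw [← skewOfLower_apply_lower a, ← skewOfLower_apply_lower b, hab]

end SkewOfLower

section CompletionMatrix

variable {n d : ℕ}

/-- The row of the edge `e` in the completion matrix of any graph containing it. -/
def completionRow (p : Fin n → Fin d → ℝ) (e : Fin n × Fin n) : Fin n × Fin d → ℝ :=
  completionMatrix Finset.univ p ⟨e, Finset.mem_univ e⟩

theorem rank_completionMatrix (E : Finset (Fin n × Fin n)) (p : Fin n → Fin d → ℝ) :
    (completionMatrix E p).rank =
      Module.finrank ℝ (Submodule.span ℝ (completionRow p '' E)) := by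
  rw [rank_eq_finrank_span_row, Set.image_eq_range]
  rfl

theorem rank_completionMatrix_of_linearIndepOn {E : Finset (Fin n × Fin n)}
    {p : Fin n → Fin d → ℝ} (h : LinearIndepOn ℝ (completionRow p) E) :
    (completionMatrix E p).rank = E.card :=
  (LinearIndependent.rank_matrix h).trans (Fintype.card_coe E)

theorem completionMatrix_mulVec_apply (E : Finset (Fin n × Fin n)) (p : Fin n → Fin d → ℝ)
    (y : Fin n × Fin d → ℝ) (e : E) :
    (completionMatrix E p *ᵥ y) e =
      p e.1.2 ⬝ᵥ (fun k => y (e.1.1, k)) + p e.1.1 ⬝ᵥ (fun k => y (e.1.2, k)) := by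
  simp [completionMatrix, mulVec, dotProduct, Fintype.sum_prod_type, add_mul,
    Finset.sum_add_distrib, ite_mul]

def linearMotion (S : Finset (Fin n)) (p : Fin n → Fin d → ℝ) :
    Matrix (Fin d) (Fin d) ℝ →ₗ[ℝ] (S × Fin d → ℝ) where
  toFun A sk := (A *ᵥ p sk.1) sk.2
  map_add' A B := by ext; simp [add_mulVec]
  map_smul' c A := by ext; simp [smul_mulVec]

theorem linearMotion_injective {S : Finset (Fin n)} {p : Fin n → Fin d → ℝ}
    (hspan : Submodule.span ℝ (p '' S) = ⊤) : Function.Injective (linearMotion S p) := by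
  rw [← LinearMap.ker_eq_bot, LinearMap.ker_eq_bot']
  intro A hA
  have hvanish : Submodule.span ℝ (p '' S) ≤ LinearMap.ker A.mulVecLin := by
    rw [Submodule.span_le]
    rintro _ ⟨v, hv, rfl⟩
    ext k
    exact congrFun hA (⟨v, hv⟩, k)
  rw [hspan, top_le_iff, LinearMap.ker_eq_top] at hvanish
  rwa [← toLin'_apply', LinearEquiv.map_eq_zero_iff] at hvanish

theorem rank_completionMatrix_le {E : Finset (Fin n × Fin n)} {S : Finset (Fin n)}
    {p : Fin n → Fin d → ℝ} (hES : ∀ e ∈ E, e.1 ∈ S ∧ e.2 ∈ S)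
    (hspan : Submodule.span ℝ (p '' S) = ⊤) :
    (completionMatrix E p).rank ≤ d * S.card - d * (d - 1) / 2 := by
  set C := completionMatrix E p
  let g : S × Fin d → Fin n × Fin d := fun sk => (sk.1, sk.2)
  have hg : Function.Injective g := by
    rintro ⟨⟨v, hv⟩, k⟩ ⟨⟨w, hw⟩, l⟩ h
    obtain ⟨rfl, rfl⟩ := Prod.mk.inj h
    rfl
  have extend_apply {v : Fin n} (hv : v ∈ S) (z : S × Fin d → ℝ) (k : Fin d) :
      Function.extend g z 0 (v, k) = z (⟨v, hv⟩, k) :=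
    hg.extend_apply z 0 (⟨v, hv⟩, k)
  let T := C.mulVecLin ∘ₗ Function.ExtendByZero.linearMap ℝ g
  have hrange : LinearMap.range T = LinearMap.range C.mulVecLin := by
    refine le_antisymm (LinearMap.range_comp_le_range _ _) ?_
    rintro _ ⟨y, rfl⟩
    refine ⟨y ∘ g, funext fun e => ?_⟩
    obtain ⟨h1, h2⟩ := hES e e.2
    change (C *ᵥ Function.extend g (y ∘ g) 0) e = (C *ᵥ y) e
    simp_rw [C, completionMatrix_mulVec_apply, extend_apply h1, extend_apply h2]
    rfl
  have hrotations : LinearMap.range (linearMotion S p ∘ₗ skewOfLower d) ≤ LinearMap.ker T := by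
    rintro _ ⟨a, rfl⟩
    refine funext fun e => ?_
    obtain ⟨h1, h2⟩ := hES e e.2
    change (C *ᵥ Function.extend g (linearMotion S p (skewOfLower d a)) 0) e = 0
    simp_rw [C, completionMatrix_mulVec_apply, extend_apply h1, extend_apply h2]
    exact dotProduct_mulVec_add_dotProduct_mulVec_eq_zero
      (skewOfLower_transpose a) (p e.1.2) (p e.1.1)
  have hnullity : d * (d - 1) / 2 ≤ Module.finrank ℝ (LinearMap.ker T) := by
    have hinj : Function.Injective (linearMotion S p ∘ₗ skewOfLower d) :=
      (linearMotion_injective hspan).comp skewOfLower_injective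
    rw [← card_lowerPairs, ← Module.finrank_fintype_fun_eq_card ℝ,
      ← LinearMap.finrank_range_of_inj hinj]
    exact Submodule.finrank_mono hrotations
  have hrankNullity := LinearMap.finrank_range_add_finrank_ker T
  rw [hrange, Module.finrank_fintype_fun_eq_card, Fintype.card_prod, Fintype.card_coe,
    Fintype.card_fin] at hrankNullity
  rw [Matrix.rank, mul_comm]
  omega

end CompletionMatrix

theorem stmt_7_general (n d : ℕ) (E : Finset (Fin n × Fin n)) (p : Fin n → Fin d → ℝ)
    (hgen : ∀ S : Finset (Fin n), d ≤ S.card → Submodule.span ℝ (p '' ↑S) = ⊤)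
    (hrank : (completionMatrix E p).rank = d * n - d * (d - 1) / 2)
    (hmin : ∀ e ∈ E, (completionMatrix (E.erase e) p).rank < d * n - d * (d - 1) / 2) :
    E.card = d * n - d * (d - 1) / 2 ∧
    ∀ S : Finset (Fin n), d ≤ S.card →
      (E.filter fun e => e.1 ∈ S ∧ e.2 ∈ S).card ≤ d * S.card - d * (d - 1) / 2 := by
  have hindep : LinearIndepOn ℝ (completionRow p) E :=
    linearIndepOn_of_finrank_span_diff_lt fun e he => by
      rw [← Finset.coe_erase, ← rank_completionMatrix, ← rank_completionMatrix, hrank]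
      exact hmin e he
  refine ⟨hrank ▸ (rank_completionMatrix_of_linearIndepOn hindep).symm, fun S hS => ?_⟩
  have hsub : (E.filter fun e => e.1 ∈ S ∧ e.2 ∈ S : Set (Fin n × Fin n)) ⊆ E :=
    Finset.coe_subset.2 (Finset.filter_subset _ _)
  rw [← rank_completionMatrix_of_linearIndepOn (hindep.mono hsub)]
  exact rank_completionMatrix_le (fun e he => (Finset.mem_filter.1 he).2) (hgen S hS)

/-- If G is minimally Gram locally completable in rank d at a generic configuration,
then |E| = dn − d(d−1)/2 and every induced subgraph on n' ≥ d vertices has at most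
dn' − d(d−1)/2 edges. -/
theorem stmt_7 (n d : ℕ) (hd : d ≤ n) (E : Finset (Fin n × Fin n)) (p : Fin n → Fin d → ℝ)
    (hgen : ∀ S : Finset (Fin n), d ≤ S.card → Submodule.span ℝ (p '' ↑S) = ⊤)
    (hrank : (completionMatrix E p).rank = d * n - d * (d - 1) / 2)
    (hmin : ∀ e ∈ E, (completionMatrix (E.erase e) p).rank < d * n - d * (d - 1) / 2) :
    E.card = d * n - d * (d - 1) / 2 ∧
    ∀ S : Finset (Fin n), d ≤ S.card →
      (E.filter fun e => e.1 ∈ S ∧ e.2 ∈ S).card ≤ d * S.card - d * (d - 1) / 2 :=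
  stmt_7_general n d E p hgen hrank hmin
end

section
/- A bipartite graph G on vertex sets of sizes n1 and n2 is minimally locally completable for rank-1 rectangular matrices if and only if G is a forest (equivalently, a (1,1)-tight sparse bipartite graph on each component). Concretely: for generic nonzero u : [n1] → R, v : [n2] → R, the system u_i ẏ_j + v_j ẋ_i = 0 over edges (i,j) has solution space of dimension exactly n1 + n2 − |E|, which equals the number of trivial motions 1 per component if and only if G is acyclic with appropriate edge count. -/
/-!
With `t = (u, -v)` the trivial motion and `f_a = t_a⁻¹ δ_a`, the row of an edge `(i, j)` is
`u_i v_j (f_i - f_j)`. Hence if `(i, j)` is not a bridge, the rows of a path from `i` to `j`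
avoiding it telescope to a multiple of its row; if it is a bridge, `t` cut off outside the
component of `i` in `G - (i, j)` is orthogonal to every other row but not to that of `(i, j)`.
So the rows are independent exactly when every edge is a bridge, i.e. when `G` is a forest,
and rank–nullity turns this into the kernel dimension. When the rows are dependent, `t` keeps
the kernel nonzero, which rules out the truncated value `n1 + n2 - |E| = 0` as well.
-/

open Matrix Module

theorem SimpleGraph.Reachable.sub_mem {V A : Type*} [AddCommGroup A] {G : SimpleGraph V}
    {S : AddSubgroup A} {F : V → A} (hS : ∀ ⦃x y⦄, G.Adj x y → F x - F y ∈ S) {x y : V}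
    (h : G.Reachable x y) : F x - F y ∈ S := by
  obtain ⟨p⟩ := h
  induction p with
  | nil => simp
  | cons hxy _ ih => simpa using S.add_mem (hS hxy) ih

theorem Matrix.linearIndependent_row_iff_finrank_ker {K m n : Type*} [Field K] [Fintype m]
    [Fintype n] {A : Matrix m n K} (hA : Nonempty m → ∃ w ≠ 0, A *ᵥ w = 0) :
    LinearIndependent K A.row ↔
      finrank K (LinearMap.ker A.mulVecLin) = Fintype.card n - Fintype.card m := by
  have hrank_add : A.rank + finrank K (LinearMap.ker A.mulVecLin) = Fintype.card n := by
    rw [Matrix.rank, LinearMap.finrank_range_add_finrank_ker, finrank_fintype_fun_eq_card]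
  refine ⟨fun h => by rw [h.rank_matrix] at hrank_add; omega, fun hker => ?_⟩
  by_contra h
  have hrank : A.rank < Fintype.card m := by
    rw [A.rank_eq_finrank_span_row, ← Set.finrank]
    exact (finrank_range_le_card _).lt_of_ne
      fun heq => h (linearIndependent_iff_card_eq_finrank_span.mpr heq.symm)
  obtain ⟨w, hw, hAw⟩ := hA (Fintype.card_pos_iff.mp (by omega))
  have : 0 < finrank K (LinearMap.ker A.mulVecLin) :=
    finrank_pos_iff_exists_ne_zero.mpr ⟨⟨w, hAw⟩, fun h0 => hw (congrArg Subtype.val h0)⟩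
  omega

namespace RankOneCompletion

open SimpleGraph

variable {α β : Type*}

def completionGraph (E : Finset (α × β)) : SimpleGraph (α ⊕ β) :=
  fromEdgeSet {s : Sym2 (α ⊕ β) | ∃ e ∈ E, s = s(Sum.inl e.1, Sum.inr e.2)}

lemma completionGraph_adj_iff {E : Finset (α × β)} {x y : α ⊕ β} :
    (completionGraph E).Adj x y ↔ ∃ e ∈ E, s(x, y) = s(Sum.inl e.1, Sum.inr e.2) := by
  refine ⟨fun h => h.1, fun ⟨e, he, hxy⟩ => ⟨⟨e, he, hxy⟩, ?_⟩⟩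
  rintro rfl
  rcases Sym2.eq_iff.mp hxy with ⟨rfl, h⟩ | ⟨rfl, h⟩ <;> cases h

variable [DecidableEq α] [DecidableEq β]

lemma completionGraph_deleteEdges (E : Finset (α × β)) (e : α × β) :
    (completionGraph E).deleteEdges {s(Sum.inl e.1, Sum.inr e.2)} =
      completionGraph (E.erase e) := by
  ext x y
  simp only [deleteEdges_adj, completionGraph_adj_iff, Finset.mem_erase, Set.mem_singleton_iff]
  constructor
  · rintro ⟨⟨f, hf, hxy⟩, hne⟩
    exact ⟨f, ⟨fun hfe => hne (hfe ▸ hxy), hf⟩, hxy⟩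
  · rintro ⟨f, ⟨hfe, hf⟩, hxy⟩
    refine ⟨⟨f, hf, hxy⟩, fun h => hfe ?_⟩
    rw [hxy] at h
    simp only [Sym2.eq_iff, Sum.inl.injEq, Sum.inr.injEq, reduceCtorEq, and_false,
      or_false] at h
    exact Prod.ext h.1 h.2

lemma isAcyclic_completionGraph_iff {E : Finset (α × β)} :
    (completionGraph E).IsAcyclic ↔
      ∀ e ∈ E, ¬(completionGraph (E.erase e)).Reachable (Sum.inl e.1) (Sum.inr e.2) := by
  simp only [isAcyclic_iff_forall_adj_isBridge, isBridge_iff, ← completionGraph_deleteEdges]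
  constructor
  · exact fun h e he => h (completionGraph_adj_iff.mpr ⟨e, he, rfl⟩)
  · intro h x y hxy
    obtain ⟨e, he, hxy⟩ := completionGraph_adj_iff.mp hxy
    rcases Sym2.eq_iff.mp hxy with ⟨rfl, rfl⟩ | ⟨rfl, rfl⟩
    · exact h e he
    · rw [Sym2.eq_swap]
      exact fun hr => h e he hr.symm

variable {K : Type*} [Field K]

def completionMatrix (u : α → K) (v : β → K) (E : Finset (α × β)) :
    Matrix E (α ⊕ β) K :=
  Matrix.of fun e => Sum.elim
    (fun i => if i = (e : α × β).1 then v (e : α × β).2 else 0)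
    (fun j => if j = (e : α × β).2 then u (e : α × β).1 else 0)

def trivialMotion (u : α → K) (v : β → K) : α ⊕ β → K := Sum.elim u (-v)

variable {u : α → K} {v : β → K} {E : Finset (α × β)}

lemma completionMatrix_row_eq_smul (hu : ∀ i, u i ≠ 0) (hv : ∀ j, v j ≠ 0) (e : E) :
    (completionMatrix u v E).row e = (u (e : α × β).1 * v (e : α × β).2) •
      (Pi.single (Sum.inl (e : α × β).1) (u (e : α × β).1)⁻¹ -
        Pi.single (Sum.inr (e : α × β).2) (-v (e : α × β).2)⁻¹) := by
  have hue := hu (e : α × β).1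
  have hve := hv (e : α × β).2
  ext (i | j) <;> simp only [completionMatrix, Matrix.row, Matrix.of_apply, Sum.elim_inl,
    Sum.elim_inr, Pi.smul_apply, Pi.sub_apply, Pi.single_apply, Sum.inl.injEq, Sum.inr.injEq,
    reduceCtorEq, if_false, smul_eq_mul] <;> split_ifs <;> field_simp <;> ring

lemma completionMatrix_row_mem_span_of_reachable (hu : ∀ i, u i ≠ 0) (hv : ∀ j, v j ≠ 0)
    {e : E} (h : (completionGraph (E.erase e)).Reachable
      (Sum.inl (e : α × β).1) (Sum.inr (e : α × β).2)) :
    (completionMatrix u v E).row e ∈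
      Submodule.span K ((completionMatrix u v E).row '' (Set.univ \ {e})) := by
  set S := Submodule.span K ((completionMatrix u v E).row '' (Set.univ \ {e}))
  let F : α ⊕ β → α ⊕ β → K := fun a => Pi.single a (trivialMotion u v a)⁻¹
  have hrow : ∀ f : E, f ≠ e →
      F (Sum.inl (f : α × β).1) - F (Sum.inr (f : α × β).2) ∈ S := by
    intro f hfe
    have hf : (completionMatrix u v E).row f ∈ S :=
      Submodule.subset_span ⟨f, ⟨trivial, hfe⟩, rfl⟩
    rw [completionMatrix_row_eq_smul hu hv] at hf
    exact (S.smul_mem_iff (mul_ne_zero (hu _) (hv _))).mp hf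
  have hadj : ∀ ⦃x y⦄, (completionGraph (E.erase e)).Adj x y →
      F x - F y ∈ S.toAddSubgroup := by
    intro x y hxy
    obtain ⟨f, hf, hxy⟩ := completionGraph_adj_iff.mp hxy
    have hfe : (⟨f, Finset.mem_of_mem_erase hf⟩ : E) ≠ e :=
      fun h => Finset.ne_of_mem_erase hf (congrArg Subtype.val h)
    rcases Sym2.eq_iff.mp hxy with ⟨rfl, rfl⟩ | ⟨rfl, rfl⟩
    · exact hrow _ hfe
    · rw [← neg_sub]
      exact neg_mem (hrow _ hfe)
  rw [completionMatrix_row_eq_smul hu hv]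
  exact S.smul_mem _ (h.sub_mem hadj)

variable [Fintype α] [Fintype β]

lemma completionMatrix_row_dotProduct (e : E) (w : α ⊕ β → K) :
    (completionMatrix u v E).row e ⬝ᵥ w =
      v (e : α × β).2 * w (Sum.inl (e : α × β).1) +
        u (e : α × β).1 * w (Sum.inr (e : α × β).2) := by
  simp [completionMatrix, Matrix.row, dotProduct, Fintype.sum_sum_type, ite_mul]

lemma completionMatrix_mulVec_trivialMotion :
    completionMatrix u v E *ᵥ trivialMotion u v = 0 := by
  ext e
  change (completionMatrix u v E).row e ⬝ᵥ trivialMotion u v = 0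
  rw [completionMatrix_row_dotProduct]
  simp [trivialMotion, mul_comm]

lemma completionMatrix_row_notMem_span_of_not_reachable (hu : ∀ i, u i ≠ 0)
    (hv : ∀ j, v j ≠ 0) {e : E} (h : ¬(completionGraph (E.erase e)).Reachable
      (Sum.inl (e : α × β).1) (Sum.inr (e : α × β).2)) :
    (completionMatrix u v E).row e ∉
      Submodule.span K ((completionMatrix u v E).row '' (Set.univ \ {e})) := by
  classical
  set G := completionGraph (E.erase e)
  let w : α ⊕ β → K := fun a =>
    if G.Reachable (Sum.inl (e : α × β).1) a then trivialMotion u v a else 0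
  have hspan : Submodule.span K ((completionMatrix u v E).row '' (Set.univ \ {e})) ≤
      LinearMap.ker ((dotProductBilin K K).flip w) := by
    rw [Submodule.span_le]
    rintro _ ⟨f, ⟨-, hfe⟩, rfl⟩
    have hadj : G.Adj (Sum.inl (f : α × β).1) (Sum.inr (f : α × β).2) :=
      completionGraph_adj_iff.mpr
        ⟨f, Finset.mem_erase.mpr ⟨fun h => hfe (Subtype.ext h), f.2⟩, rfl⟩
    simp only [SetLike.mem_coe, LinearMap.mem_ker, LinearMap.flip_apply,
      dotProductBilin_apply_apply, completionMatrix_row_dotProduct, w]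
    by_cases hr : G.Reachable (Sum.inl (e : α × β).1) (Sum.inl (f : α × β).1)
    · rw [if_pos hr, if_pos (hr.trans hadj.reachable)]
      simp [trivialMotion, mul_comm]
    · rw [if_neg hr, if_neg fun hr' => hr (hr'.trans hadj.symm.reachable)]
      simp
  intro hmem
  have hdot := hspan hmem
  simp only [LinearMap.mem_ker, LinearMap.flip_apply, dotProductBilin_apply_apply,
    completionMatrix_row_dotProduct, w, if_pos (Reachable.refl _), if_neg h, trivialMotion,
    Sum.elim_inl, mul_zero, add_zero] at hdot
  exact mul_ne_zero (hv _) (hu _) hdot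

theorem linearIndependent_completionMatrix_row_iff (hu : ∀ i, u i ≠ 0) (hv : ∀ j, v j ≠ 0) :
    LinearIndependent K (completionMatrix u v E).row ↔ (completionGraph E).IsAcyclic := by
  rw [linearIndependent_iff_notMem_span, isAcyclic_completionGraph_iff]
  exact ⟨fun h e he hr => h ⟨e, he⟩ (completionMatrix_row_mem_span_of_reachable hu hv hr),
    fun h e => completionMatrix_row_notMem_span_of_not_reachable hu hv (h e e.2)⟩

end RankOneCompletion

open RankOneCompletion in
/-- A bipartite graph is minimally locally completable for rank-1 rectangular matrices iff
it is a forest: for nonzero u, v the system u_i ẏ_j + v_j ẋ_i = 0 over edges has solution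
space of dimension exactly n1 + n2 − |E| iff the graph is acyclic. -/
theorem stmt_9 (n1 n2 : ℕ) (E : Finset (Fin n1 × Fin n2))
    (u : Fin n1 → ℝ) (v : Fin n2 → ℝ) (hu : ∀ i, u i ≠ 0) (hv : ∀ j, v j ≠ 0) :
    let M : Matrix {e // e ∈ E} (Fin n1 ⊕ Fin n2) ℝ :=
      Matrix.of fun e => Sum.elim
        (fun i => if i = (e : Fin n1 × Fin n2).1 then v (e : Fin n1 × Fin n2).2 else 0)
        (fun j => if j = (e : Fin n1 × Fin n2).2 then u (e : Fin n1 × Fin n2).1 else 0)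
    (SimpleGraph.fromEdgeSet
        {s : Sym2 (Fin n1 ⊕ Fin n2) | ∃ e ∈ E, s = s(Sum.inl e.1, Sum.inr e.2)}).IsAcyclic ↔
      Module.finrank ℝ (LinearMap.ker M.mulVecLin) = n1 + n2 - E.card := by
  intro M
  have htrivial : Nonempty E → ∃ w ≠ 0, completionMatrix u v E *ᵥ w = 0 := fun ⟨e⟩ =>
    ⟨trivialMotion u v, fun h => hu _ (congrFun h (Sum.inl (e : Fin n1 × Fin n2).1)),
      completionMatrix_mulVec_trivialMotion⟩
  change (completionGraph E).IsAcyclic ↔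
    Module.finrank ℝ (LinearMap.ker (completionMatrix u v E).mulVecLin) = n1 + n2 - E.card
  rw [← linearIndependent_completionMatrix_row_iff hu hv,
    Matrix.linearIndependent_row_iff_finrank_ker htrivial]
  simp
end

section
/- For a bipartite graph G that is a tree spanning [n1] ⊔ [n2], and generic nonzero u : [n1] → R, v : [n2] → R, the values u_i v_j on the edges of G uniquely determine all products u_i v_j for every pair (i,j): if u', v' are nonzero assignments with u'_i v'_j = u_i v_j for all edges (i,j) ∈ E(G), then u'_i v'_j = u_i v_j for all i ∈ [n1], j ∈ [n2]. -/
lemma reach_const {V : Type*} {G : SimpleGraph V} (f : V → ℝ)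
    (hadj : ∀ x y, G.Adj x y → f x = f y) :
    ∀ x y, G.Reachable x y → f x = f y := by
  intro x y ⟨w⟩
  induction w with
  | nil => rfl
  | cons h p ih => exact (hadj _ _ h).trans ih

/-- For a bipartite graph that is a spanning tree, the products u_i v_j on the edges
uniquely determine all products u_i v_j (all factor entries nonzero). -/
theorem stmt_10 (n1 n2 : ℕ) (E : Finset (Fin n1 × Fin n2))
    (hTree : (SimpleGraph.fromEdgeSet
      {s : Sym2 (Fin n1 ⊕ Fin n2) | ∃ e ∈ E, s = s(Sum.inl e.1, Sum.inr e.2)}).IsTree)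
    (u u' : Fin n1 → ℝ) (v v' : Fin n2 → ℝ)
    (hu : ∀ i, u i ≠ 0) (hv : ∀ j, v j ≠ 0) (hu' : ∀ i, u' i ≠ 0) (hv' : ∀ j, v' j ≠ 0)
    (hagree : ∀ e ∈ E, u' e.1 * v' e.2 = u e.1 * v e.2) :
    ∀ (i : Fin n1) (j : Fin n2), u' i * v' j = u i * v j := by
  set G := SimpleGraph.fromEdgeSet
      {s : Sym2 (Fin n1 ⊕ Fin n2) | ∃ e ∈ E, s = s(Sum.inl e.1, Sum.inr e.2)} with hG
  set f : Fin n1 ⊕ Fin n2 → ℝ := fun x => match x with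
    | Sum.inl i => u' i / u i
    | Sum.inr j => v j / v' j with hf
  have key : ∀ (i : Fin n1) (j : Fin n2), (i, j) ∈ E → u' i / u i = v j / v' j := by
    intro i j hij
    have h := hagree (i, j) hij
    rw [div_eq_div_iff (hu i) (hv' j)]
    linarith [h]
  have hadj : ∀ x y, G.Adj x y → f x = f y := by
    intro x y hxy
    rw [SimpleGraph.fromEdgeSet_adj] at hxy
    obtain ⟨⟨e, he, hs⟩, _⟩ := hxy
    rw [Sym2.eq_iff] at hs
    rcases hs with ⟨hx, hy⟩ | ⟨hx, hy⟩ <;> subst hx <;> subst hy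
    · exact key e.1 e.2 he
    · exact (key e.1 e.2 he).symm
  intro i j
  have hr : G.Reachable (Sum.inl i) (Sum.inr j) := hTree.isConnected.preconnected _ _
  have := reach_const f hadj _ _ hr
  simp only [hf] at this
  have h1 := hu i; have h2 := hv j; have h3 := hu' i; have h4 := hv' j
  rw [div_eq_div_iff (hu i) (hv' j)] at this
  linarith
end

section
/- If the bipartite graph of observed entries of a rank-1 matrix X = u vᵀ (with all u_i, v_j nonzero) is disconnected, then the completion is not unique: there exist u', v' with all entries nonzero such that u'_i v'_j = u_i v_j for all observed edges, but u' v'ᵀ ≠ u vᵀ. -/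
/-- If the bipartite graph of observed entries of a rank-1 matrix u vᵀ (nonzero factors) is
disconnected, then completion is not unique. -/
theorem stmt_11 (n1 n2 : ℕ) (h1 : 0 < n1) (h2 : 0 < n2) (E : Finset (Fin n1 × Fin n2))
    (hdisc : ¬ (SimpleGraph.fromEdgeSet
      {s : Sym2 (Fin n1 ⊕ Fin n2) | ∃ e ∈ E, s = s(Sum.inl e.1, Sum.inr e.2)}).Connected)
    (u : Fin n1 → ℝ) (v : Fin n2 → ℝ) (hu : ∀ i, u i ≠ 0) (hv : ∀ j, v j ≠ 0) :
    ∃ (u' : Fin n1 → ℝ) (v' : Fin n2 → ℝ), (∀ i, u' i ≠ 0) ∧ (∀ j, v' j ≠ 0) ∧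
      (∀ e ∈ E, u' e.1 * v' e.2 = u e.1 * v e.2) ∧
      (fun (i : Fin n1) (j : Fin n2) => u' i * v' j) ≠
        (fun (i : Fin n1) (j : Fin n2) => u i * v j) := by
  classical
  set G := SimpleGraph.fromEdgeSet
      {s : Sym2 (Fin n1 ⊕ Fin n2) | ∃ e ∈ E, s = s(Sum.inl e.1, Sum.inr e.2)} with hG
  have hne : Nonempty (Fin n1 ⊕ Fin n2) := ⟨Sum.inl ⟨0, h1⟩⟩
  have hpre : ¬ G.Preconnected := fun hp => hdisc ⟨hp⟩
  rw [SimpleGraph.Preconnected] at hpre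
  push_neg at hpre
  obtain ⟨x, y, hxy⟩ := hpre
  set r : Fin n1 ⊕ Fin n2 → Prop := fun z => G.Reachable x z with hr
  -- edges connect components
  have hedge : ∀ e ∈ E, (r (Sum.inl e.1) ↔ r (Sum.inr e.2)) := by
    intro e he
    have hadj : G.Adj (Sum.inl e.1) (Sum.inr e.2) := by
      rw [hG, SimpleGraph.fromEdgeSet_adj]
      exact ⟨⟨e, he, rfl⟩, by simp⟩
    exact ⟨fun h => h.trans hadj.reachable, fun h => h.trans hadj.symm.reachable⟩
  refine ⟨fun i => if r (Sum.inl i) then 2 * u i else u i,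
          fun j => if r (Sum.inr j) then v j / 2 else v j,
          ?_, ?_, ?_, ?_⟩
  · intro i; by_cases h : r (Sum.inl i) <;> simp [h, hu i]
  · intro j; by_cases h : r (Sum.inr j) <;> simp [h, hv j]
  · intro e he
    have := hedge e he
    by_cases h : r (Sum.inl e.1)
    · have h2 : r (Sum.inr e.2) := this.mp h
      simp [h, h2]; ring
    · have h2 : ¬ r (Sum.inr e.2) := fun hh => h (this.mpr hh)
      simp [h, h2]
  · -- find a mismatched pair
    intro hfun
    have key : ∀ (i : Fin n1) (j : Fin n2), (r (Sum.inl i) ↔ r (Sum.inr j)) := by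
      intro i j
      have := congrFun (congrFun hfun i) j
      by_cases ha : r (Sum.inl i) <;> by_cases hb : r (Sum.inr j) <;>
        simp [ha, hb] at this ⊢
      · rcases this with h | h
        · exact hu i (by linarith)
        · exact hv j h
      · rcases this with h | h
        · exact hv j (by linarith)
        · exact hu i h
    -- so r is constant-true on both sides (since r x holds), contradicting ¬ r y
    have hx : r x := SimpleGraph.Reachable.refl x
    have hall : ∀ z, r z := by
      intro z
      have i0 : Fin n1 := ⟨0, h1⟩
      have j0 : Fin n2 := ⟨0, h2⟩
      have hiff : ∀ z w, r z ↔ r w := by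
        intro z w
        cases z with
        | inl i => cases w with
          | inl i' => exact (key i j0).trans (key i' j0).symm
          | inr j' => exact key i j'
        | inr j => cases w with
          | inl i' => exact (key i' j).symm
          | inr j' => exact (key i0 j).symm.trans (key i0 j')
      exact (hiff x z).mp hx
    exact hxy (hall y)
end

section
/- If G is a connected graph on n vertices containing an even cycle (and |E| = n, so G is a tree plus one edge forming an even cycle), then generic 1D Gram completion is not unique even up to sign: working with absolute values, the linear system q_i + q_j = c_{ij} over edges (where q_i = log|p_i|) has a nontrivial kernel, so there exist p' ≠ ±p with p'_i p'_j = p_i p_j on all edges. -/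
open SimpleGraph Walk

private lemma edgeSet_delete {V : Type} (G : SimpleGraph V) (e : Sym2 V) :
    (G \ SimpleGraph.fromEdgeSet {e}).edgeSet = G.edgeSet \ {e} := by
  rw [SimpleGraph.edgeSet_sdiff, SimpleGraph.edgeSet_fromEdgeSet,
    SimpleGraph.edgeSet_sdiff_sdiff_isDiag]

private lemma conn_del {V : Type} (G : SimpleGraph V) {x y : V}
    (hr : (G \ SimpleGraph.fromEdgeSet {s(x, y)}).Reachable x y) (hc : G.Connected) :
    (G \ SimpleGraph.fromEdgeSet {s(x, y)}).Connected := by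
  rw [SimpleGraph.connected_iff]
  refine ⟨fun a b => ?_, hc.nonempty⟩
  obtain ⟨w⟩ := hc a b
  induction w with
  | nil => exact SimpleGraph.Reachable.refl _
  | @cons u c d h q ih =>
    refine SimpleGraph.Reachable.trans ?_ ih
    by_cases he : s(u, c) = s(x, y)
    · rw [Sym2.eq_iff] at he
      rcases he with ⟨rfl, rfl⟩ | ⟨rfl, rfl⟩
      · exact hr
      · exact hr.symm
    · exact SimpleGraph.Adj.reachable (by simp [SimpleGraph.sdiff_adj,
        SimpleGraph.fromEdgeSet_adj, h, he])

private lemma delete_step {V : Type} [Fintype V] (G : SimpleGraph V) (hc : G.Connected)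
    {u : V} (c : G.Walk u u) (hcyc : c.IsCycle) :
    ∃ G' : SimpleGraph V, G'.Connected ∧ Nat.card G'.edgeSet + 1 = Nat.card G.edgeSet := by
  classical
  cases c with
  | nil => exact absurd hcyc (by simp [Walk.isCycle_def])
  | @cons _ b _ hadj q =>
    have hmem : s(u, b) ∈ (Walk.cons hadj q).edges := by simp
    have hrd := (SimpleGraph.adj_and_reachable_delete_edges_iff_exists_cycle.mpr
      ⟨u, _, hcyc, hmem⟩).2
    refine ⟨G \ SimpleGraph.fromEdgeSet {s(u, b)}, conn_del G hrd hc, ?_⟩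
    rw [edgeSet_delete, Nat.card_coe_set_eq, Nat.card_coe_set_eq,
      Set.ncard_diff_singleton_of_mem ((G.mem_edgeSet).mpr hadj)]
    have hpos : 0 < G.edgeSet.ncard :=
      (Set.ncard_pos (Set.toFinite _)).mpr ⟨_, (G.mem_edgeSet).mpr hadj⟩
    omega

private lemma card_le_aux {V : Type} [Fintype V] :
    ∀ (n : ℕ) (G : SimpleGraph V), Nat.card G.edgeSet = n → G.Connected →
      Fintype.card V ≤ n + 1 := by
  intro n
  induction n using Nat.strong_induction_on with
  | _ n ih =>
    intro G hn hc
    by_cases ha : G.IsAcyclic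
    · classical
      have ht : G.IsTree := ⟨hc, ha⟩
      have : Fintype G.edgeSet := Fintype.ofFinite _
      have hcE := ht.card_edgeFinset
      have : G.edgeFinset.card = Nat.card G.edgeSet := by
        rw [SimpleGraph.edgeFinset, Set.toFinset_card, Nat.card_eq_fintype_card]
      omega
    · rw [SimpleGraph.IsAcyclic] at ha
      push_neg at ha
      obtain ⟨v, c, hcyc⟩ := ha
      obtain ⟨G', hconn', hcard'⟩ := delete_step G hc c hcyc
      have := ih (Nat.card G'.edgeSet) (by omega) G' rfl hconn'
      omega

private lemma card_lt_aux {V : Type} [Fintype V] (G : SimpleGraph V) (hc : G.Connected)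
    {u : V} (c : G.Walk u u) (hcyc : c.IsCycle) :
    Fintype.card V ≤ Nat.card G.edgeSet := by
  obtain ⟨G', hconn', hcard'⟩ := delete_step G hc c hcyc
  have := card_le_aux (Nat.card G'.edgeSet) G' rfl hconn'
  omega

private noncomputable def htf {V : Type} (T : SimpleGraph V) (hT : T.IsTree) (r u : V) : ℕ :=
  (hT.existsUnique_path r u).choose.length

private lemma htf_spec {V : Type} (T : SimpleGraph V) (hT : T.IsTree) (r u : V)
    (q : T.Walk r u) (hq : q.IsPath) : q.length = htf T hT r u := by
  have h := (hT.existsUnique_path r u).choose_spec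
  exact congrArg Walk.length (h.2 q hq)

private lemma htf_adj {V : Type} (T : SimpleGraph V) (hT : T.IsTree) (r : V) {x y : V}
    (hxy : T.Adj x y) :
    htf T hT r x + 1 = htf T hT r y ∨ htf T hT r y + 1 = htf T hT r x := by
  classical
  obtain ⟨hp, hup⟩ := (hT.existsUnique_path r x).choose_spec
  set p := (hT.existsUnique_path r x).choose with hpdef
  have hlen : p.length = htf T hT r x := rfl
  by_cases hy : y ∈ p.support
  · right
    have h1 : (p.takeUntil y hy).length = htf T hT r y :=
      htf_spec T hT r y _ (hp.takeUntil hy)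
    have hdp : (p.dropUntil y hy).IsPath := hp.dropUntil hy
    have hsingle : (Walk.cons hxy.symm Walk.nil : T.Walk y x).IsPath := by
      simp [Walk.cons_isPath_iff, hxy.ne']
    obtain ⟨_, hux⟩ := (hT.existsUnique_path y x).choose_spec
    have heq : p.dropUntil y hy = Walk.cons hxy.symm Walk.nil :=
      (hux _ hdp).trans (hux _ hsingle).symm
    have hsum : (p.takeUntil y hy).length + (p.dropUntil y hy).length = p.length := by
      rw [← Walk.length_append, Walk.take_spec]
    rw [heq] at hsum
    simp only [Walk.length_cons, Walk.length_nil] at hsum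
    omega
  · left
    have hq : (p.concat hxy).IsPath := by
      rw [← Walk.isPath_reverse_iff, Walk.reverse_concat]
      rw [Walk.cons_isPath_iff]
      constructor
      · rwa [Walk.isPath_reverse_iff]
      · simpa [Walk.support_reverse] using hy
    have := htf_spec T hT r y _ hq
    rw [Walk.length_concat] at this
    omega

private lemma htf_walk {V : Type} (T : SimpleGraph V) (hT : T.IsTree) (r : V) :
    ∀ {a b : V} (q : T.Walk a b),
      Even (q.length + htf T hT r a + htf T hT r b) := by
  intro a b q
  induction q with
  | nil => simp only [Walk.length_nil, Nat.even_iff]; omega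
  | @cons u c d h q ih =>
    rcases htf_adj T hT r h with h1 | h1 <;>
      · simp only [Walk.length_cons, Nat.even_iff] at ih ⊢
        omega

/-- If a connected graph with |E| = |V| contains an even cycle, then 1D Gram completion is
not unique even up to sign: there exists p' ≠ ±p with p'_i p'_j = p_i p_j on all edges. -/
theorem stmt_13 {V : Type} [Fintype V] (G : SimpleGraph V) (hconn : G.Connected)
    (hcard : Nat.card G.edgeSet = Nat.card V)
    (heven : ∃ (v : V) (w : G.Walk v v), w.IsCycle ∧ Even w.length)
    (p : V → ℝ) (hp : ∀ i, p i ≠ 0) :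
    ∃ p' : V → ℝ, (∀ i, p' i ≠ 0) ∧ p' ≠ p ∧ p' ≠ -p ∧
      ∀ i j, G.Adj i j → p' i * p' j = p i * p j := by
  classical
  obtain ⟨v, w, hcyc, hev⟩ := heven
  cases w with
  | nil => exact absurd hcyc (by simp [Walk.isCycle_def])
  | @cons _ b _ hadj q =>
    set e : Sym2 V := s(v, b) with hedef
    set T : SimpleGraph V := G \ SimpleGraph.fromEdgeSet {e} with hTdef
    have hmem : e ∈ (Walk.cons hadj q).edges := by simp [hedef]
    have hreach : T.Reachable v b :=
      (SimpleGraph.adj_and_reachable_delete_edges_iff_exists_cycle.mpr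
        ⟨v, _, hcyc, hmem⟩).2
    have hTconn : T.Connected := conn_del G hreach hconn
    have hVpos : 0 < Fintype.card V := @Fintype.card_pos _ _ hconn.nonempty
    have hcardV : Nat.card G.edgeSet = Fintype.card V :=
      hcard.trans Nat.card_eq_fintype_card
    have hTE : T.edgeSet = G.edgeSet \ {e} := edgeSet_delete G e
    have hTcard : Nat.card T.edgeSet + 1 = Fintype.card V := by
      rw [hTE, Nat.card_coe_set_eq, Set.ncard_diff_singleton_of_mem ((G.mem_edgeSet).mpr hadj)]
      rw [Nat.card_coe_set_eq] at hcardV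
      have hpos : 0 < G.edgeSet.ncard := (Set.ncard_pos (Set.toFinite _)).mpr ⟨_, (G.mem_edgeSet).mpr hadj⟩
      omega
    have hTacyclic : T.IsAcyclic := by
      by_contra ha
      rw [SimpleGraph.IsAcyclic] at ha
      push_neg at ha
      obtain ⟨u, c, hc⟩ := ha
      have := card_lt_aux T hTconn c hc
      omega
    have hT : T.IsTree := ⟨hTconn, hTacyclic⟩
    -- q transfers to T
    have hqe : ∀ f ∈ q.edges, f ∈ T.edgeSet := by
      intro f hf
      rw [hTE]
      refine ⟨(Walk.cons hadj q).edges_subset_edgeSet (by simp [hf]), ?_⟩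
      have hnodup : ((Walk.cons hadj q).edges).Nodup := hcyc.edges_nodup
      simp only [Walk.edges_cons, List.nodup_cons] at hnodup
      intro hfe
      rw [Set.mem_singleton_iff] at hfe
      rw [hfe, hedef] at hf
      exact hnodup.1 hf
    have hoddvb : ¬ (Even (htf T hT v v) ↔ Even (htf T hT v b)) := by
      have hwalk := htf_walk T hT v (q.transfer T hqe)
      rw [Walk.length_transfer] at hwalk
      have hql : Even (q.length + 1) := by simpa using hev
      simp only [Nat.even_iff] at hwalk hql ⊢
      omega
    have hkey : ∀ i j, G.Adj i j → ¬ (Even (htf T hT v i) ↔ Even (htf T hT v j)) := by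
      intro i j hij
      by_cases hTij : T.Adj i j
      · rcases htf_adj T hT v hTij with h1 | h1 <;>
          · simp only [Nat.even_iff] at *
            omega
      · have hije : s(i, j) = e := by
          by_contra hne
          exact hTij (by simp [hTdef, SimpleGraph.sdiff_adj,
            SimpleGraph.fromEdgeSet_adj, hij, hne])
        rw [hedef, Sym2.eq_iff] at hije
        rcases hije with ⟨rfl, rfl⟩ | ⟨rfl, rfl⟩
        · exact hoddvb
        · simp only [Nat.even_iff] at hoddvb ⊢
          omega
    have hHv : htf T hT v v = 0 := by
      have := htf_spec T hT v v Walk.nil Walk.IsPath.nil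
      simpa using this.symm
    refine ⟨fun i => (if Even (htf T hT v i) then (2 : ℝ) else 2⁻¹) * p i, ?_, ?_, ?_, ?_⟩
    · intro i
      by_cases h : Even (htf T hT v i) <;> simp [h, hp i]
    · intro hcontra
      have := congrFun hcontra v
      rw [hHv] at this
      simp only [Even.zero, if_pos] at this
      exact hp v (by linarith)
    · intro hcontra
      have := congrFun hcontra v
      rw [hHv] at this
      simp only [Even.zero, if_pos, Pi.neg_apply] at this
      exact hp v (by linarith)
    · intro i j hij
      have h := hkey i j hij
      by_cases hi : Even (htf T hT v i)
      · have hj : ¬ Even (htf T hT v j) := fun hj => h ⟨fun _ => hj, fun _ => hi⟩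
        simp only [hi, hj, if_pos, if_neg, not_false_iff]
        ring
      · have hj : Even (htf T hT v j) := by
          by_contra hj
          exact h ⟨fun h' => absurd h' hi, fun h' => absurd h' hj⟩
        simp only [hi, hj, if_pos, if_neg, not_false_iff]
        ring
end
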